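/- For odd n ≥ 3 and k ≥ 0, the unicyclic graph G(n;k,...,k) obtained by attaching exactly k pendant vertices to each vertex of the odd cycle C_n has super edge-magic total strength sm(G(n;k,...,k)) = 2n(k+1) + (n+3)/2. -/

import Mathlib

/-- A super edge-magic total labeling of a graph `G` with `p = Fintype.card V` vertices and
`q = G.edgeSet.ncard` edges: `fv` maps the vertices bijectively onto `{1,…,p}`, `fe` maps the
edges bijectively onto `{p+1,…,p+q}` (so together they form a bijection of `V ∪ E` onto
`{1,…,p+q}` with `f(V) = {1,…,p}`), and every edge `uv` satisfies `f(u)+f(v)+f(uv) = c`. -/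
def IsSEMT {V : Type*} [Fintype V] (G : SimpleGraph V)
    (fv : V → ℕ) (fe : Sym2 V → ℕ) (c : ℕ) : Prop :=
  Set.BijOn fv Set.univ (Set.Icc 1 (Fintype.card V)) ∧
  Set.BijOn fe G.edgeSet
    (Set.Icc (Fintype.card V + 1) (Fintype.card V + G.edgeSet.ncard)) ∧
  ∀ u v, G.Adj u v → fv u + fv v + fe s(u, v) = c

/-- The unicyclic graph `G(n; k₁, …, kₙ)`: a cycle on `Fin n` (vertex `i` adjacent to `i+1 mod n`)
with `k i` pendant vertices attached to the cycle vertex `i`. -/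
def pendantCycle (n : ℕ) (k : Fin n → ℕ) :
    SimpleGraph (Fin n ⊕ Σ i : Fin n, Fin (k i)) :=
  SimpleGraph.fromRel (fun a b =>
    (∃ i j : Fin n, a = Sum.inl i ∧ b = Sum.inl j ∧ (i.val + 1) % n = j.val) ∨
    (∃ (i : Fin n) (j : Fin (k i)), a = Sum.inr ⟨i, j⟩ ∧ b = Sum.inl i))


/-!
Write `p = n(k+1)` for the number of vertices, which is also the number of edges: every vertex
owns one edge (a cycle vertex the edge to its successor, a pendant vertex its pendant edge).
Summing the magic condition over all edges counts each cycle label `k + 2` times and each pendant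
label once, so `p c = (1 + ⋯ + 2p) + (k + 1) S`, where `S ≥ 1 + ⋯ + n` is the sum of the cycle
labels; this gives `c ≥ 2p + (n + 3)/2`.

For the matching labelling, write `n = 2m + 1` and label the cycle `1, m+2, 2, m+3, …, m+1`,
whose consecutive sums are `m+2, …, m+1+n` up to rotation. The `j`-th pendant at `i` receives
the label of the successor of `i` shifted by `(j+1)n`, so its edge sum is the cycle edge sum at
`i` shifted by `(j+1)n`. All `p` edge sums are then consecutive, and labelling each edge by
`c` minus its edge sum completes the labelling.
-/

open Finset Function

lemma Set.bijOn_of_injOn_of_ncard_le {α β : Type*} {f : α → β} {s : Set α} {t : Set β}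
    (hm : Set.MapsTo f s t) (hi : Set.InjOn f s) (ht : t.Finite) (hc : t.ncard ≤ s.ncard) :
    Set.BijOn f s t := by
  have himage : f '' s = t :=
    Set.eq_of_subset_of_ncard_le hm.image_subset (by rwa [hi.ncard_image]) ht
  exact himage ▸ hi.bijOn_image

lemma Nat.eq_and_eq_of_mul_add_eq {n l l' r r' : ℕ} (hr : r < n) (hr' : r' < n)
    (h : l * n + r = l' * n + r') : l = l' ∧ r = r' := by
  have hdiv : ∀ a b, b < n → (a * n + b) / n = a := fun a b hb => by
    rw [Nat.add_comm, Nat.add_mul_div_right _ _ (by omega), Nat.div_eq_of_lt hb, Nat.zero_add]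
  have hl : l = l' := by rw [← hdiv l r hr, ← hdiv l' r' hr', h]
  subst hl
  exact ⟨rfl, by omega⟩

lemma Finset.sum_eq_sum_Ioc_of_bijOn {ι : Type*} [Fintype ι] {g : ι → ℕ} {a b : ℕ}
    (h : Set.BijOn g Set.univ (Set.Icc (a + 1) b)) : ∑ x, g x = ∑ i ∈ Ioc a b, i := by
  rw [← Finset.Icc_add_one_left_eq_Ioc]
  exact Finset.sum_nbij g (fun x _ => by simpa using h.mapsTo (Set.mem_univ x))
    (by simpa using h.injOn) (by simpa using h.surjOn) (fun _ _ => rfl)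

lemma Finset.two_mul_sum_Ioc_zero (N : ℕ) : 2 * ∑ i ∈ Ioc 0 N, i = N * (N + 1) := by
  induction N with
  | zero => simp
  | succ N ih => rw [Finset.sum_Ioc_succ_top (Nat.zero_le N), mul_add, ih]; ring

lemma Finset.card_mul_succ_le_two_mul_sum (T : Finset ℕ) (hT : 0 ∉ T) :
    #T * (#T + 1) ≤ 2 * ∑ x ∈ T, x := by
  induction T using Finset.induction_on_max with
  | empty => simp
  | insert a T hlt ih =>
    have haT : a ∉ T := fun h => lt_irrefl a (hlt a h)
    have hpos : ∀ x ∈ insert a T, 0 < x := fun x hx =>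
      Nat.pos_of_ne_zero (by rintro rfl; exact hT hx)
    have hcard : #T + 1 ≤ a := by
      have hsub : T ⊆ Ico 1 a := fun x hx =>
        mem_Ico.2 ⟨hpos x (mem_insert_of_mem hx), hlt x hx⟩
      have := card_le_card hsub
      have := hpos a (mem_insert_self a T)
      simp only [Nat.card_Ico] at *
      omega
    have ih := ih fun h => hT (mem_insert_of_mem h)
    rw [card_insert_of_notMem haT, sum_insert haT]
    nlinarith

lemma Fintype.card_mul_succ_le_two_mul_sum {ι : Type*} [Fintype ι] {g : ι → ℕ}
    (hg : Injective g) (hpos : ∀ i, 0 < g i) :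
    card ι * (card ι + 1) ≤ 2 * ∑ i, g i := by
  have := Finset.card_mul_succ_le_two_mul_sum (univ.image g) fun h0 => by
    obtain ⟨i, -, hi⟩ := mem_image.1 h0
    exact (hpos i).ne' hi
  rwa [card_image_of_injective _ hg, sum_image hg.injOn, card_univ] at this

section Labelings

variable {V : Type*}

def edgeSum (f : V → ℕ) : Sym2 V → ℕ :=
  Sym2.lift ⟨fun u v => f u + f v, fun u v => Nat.add_comm (f u) (f v)⟩

@[simp]
lemma edgeSum_mk (f : V → ℕ) (u v : V) : edgeSum f s(u, v) = f u + f v := rfl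

lemma IsSEMT.edgeSum_add_eq [Fintype V] {G : SimpleGraph V} {fv : V → ℕ} {fe : Sym2 V → ℕ}
    {c : ℕ} (h : IsSEMT G fv fe c) {e : Sym2 V} (he : e ∈ G.edgeSet) :
    edgeSum fv e + fe e = c := by
  induction e using Sym2.ind with
  | _ u v => exact h.2.2 u v he

lemma bijOn_tsub_Icc (p q s : ℕ) :
    Set.BijOn (fun x => p + q + s + 1 - x) (Set.Icc (s + 1) (s + q))
      (Set.Icc (p + 1) (p + q)) := by
  refine ⟨fun x hx => ?_, fun x hx y hy hxy => ?_,
    fun y hy => ⟨p + q + s + 1 - y, ?_, ?_⟩⟩ <;> simp only [Set.mem_Icc] at * <;> omega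

/-- The criterion of Figueroa-Centeno, Ichishima and Muntaner-Batle. -/
lemma isSEMT_of_bijOn_edgeSum [Fintype V] (G : SimpleGraph V) (f : V → ℕ) (s : ℕ)
    (hf : Set.BijOn f Set.univ (Set.Icc 1 (Fintype.card V)))
    (hs : Set.BijOn (edgeSum f) G.edgeSet (Set.Icc (s + 1) (s + G.edgeSet.ncard))) :
    IsSEMT G f (fun e => Fintype.card V + G.edgeSet.ncard + s + 1 - edgeSum f e)
      (Fintype.card V + G.edgeSet.ncard + s + 1) := by
  refine ⟨hf, (bijOn_tsub_Icc _ _ s).comp hs, fun u v huv => ?_⟩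
  have := (hs.mapsTo (G.mem_edgeSet.2 huv)).2
  simp only [edgeSum_mk] at this ⊢
  omega

end Labelings

lemma Fin.val_finRotate_eq_mod {n : ℕ} (i : Fin n) : (finRotate n i : ℕ) = (i + 1) % n := by
  have := i.neZero
  rw [finRotate_apply, Fin.val_add, Fin.val_one', Nat.add_mod_mod]

lemma Fin.val_finRotate {n : ℕ} (i : Fin n) :
    (finRotate n i : ℕ) = if (i : ℕ) + 1 = n then 0 else (i : ℕ) + 1 := by
  rw [Fin.val_finRotate_eq_mod]
  split_ifs with h
  · rw [h, Nat.mod_self]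
  · exact Nat.mod_eq_of_lt (by omega)

section PendantCycle

variable {n k : ℕ}

def pendantCycleEdge : Fin n ⊕ (Σ _ : Fin n, Fin k) → Sym2 (Fin n ⊕ Σ _ : Fin n, Fin k)
  | .inl i => s(.inl i, .inl (finRotate n i))
  | .inr x => s(.inr x, .inl x.1)

lemma pendantCycleEdge_mem_edgeSet (hn : 3 ≤ n) (v : Fin n ⊕ Σ _ : Fin n, Fin k) :
    pendantCycleEdge v ∈ (pendantCycle n fun _ => k).edgeSet := by
  rcases v with i | ⟨i, j⟩ <;> rw [pendantCycleEdge, SimpleGraph.mem_edgeSet]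
  · refine (SimpleGraph.fromRel_adj _ _ _).2
      ⟨fun h => ?_, .inl (.inl ⟨i, _, rfl, rfl, ?_⟩)⟩
    · have := congrArg Fin.val (Sum.inl.inj h)
      rw [Fin.val_finRotate] at this
      split_ifs at this <;> omega
    · exact (Fin.val_finRotate_eq_mod i).symm
  · exact (SimpleGraph.fromRel_adj _ _ _).2 ⟨Sum.inr_ne_inl, .inl (.inr ⟨i, j, rfl, rfl⟩)⟩

lemma edgeSet_pendantCycle (hn : 3 ≤ n) :
    (pendantCycle n fun _ => k).edgeSet = Set.range pendantCycleEdge := by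
  refine Set.Subset.antisymm (fun e he => ?_)
    (Set.range_subset_iff.2 (pendantCycleEdge_mem_edgeSet hn))
  induction e using Sym2.ind with
  | _ u v =>
  rw [SimpleGraph.mem_edgeSet, pendantCycle, SimpleGraph.fromRel_adj] at he
  obtain ⟨-, hrel⟩ := he
  have hsucc : ∀ {i j : Fin n}, (i.val + 1) % n = j.val → j = finRotate n i := fun h =>
    Fin.ext (h.symm.trans (Fin.val_finRotate_eq_mod _).symm)
  rcases hrel with (⟨i, j, rfl, rfl, hij⟩ | ⟨i, j, rfl, rfl⟩) |
      (⟨i, j, rfl, rfl, hij⟩ | ⟨i, j, rfl, rfl⟩)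
  · exact ⟨.inl i, by rw [hsucc hij]; rfl⟩
  · exact ⟨.inr ⟨i, j⟩, rfl⟩
  · exact ⟨.inl i, by rw [hsucc hij]; exact Sym2.eq_swap⟩
  · exact ⟨.inr ⟨i, j⟩, Sym2.eq_swap⟩

lemma pendantCycleEdge_injective (hn : 3 ≤ n) :
    Injective (pendantCycleEdge (n := n) (k := k)) := by
  rintro (i | x) (i' | x') h <;> simp only [pendantCycleEdge, Sym2.eq_iff] at h
  · rcases h with ⟨h, -⟩ | ⟨h, h'⟩
    · exact congrArg _ (Sum.inl.inj h)
    · have e := congrArg Fin.val (Sum.inl.inj h)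
      have e' := congrArg Fin.val (Sum.inl.inj h')
      rw [Fin.val_finRotate] at e e'
      congr 1
      ext
      split_ifs at e e' <;> omega
  · simp at h
  · simp at h
  · rcases h with ⟨h, -⟩ | ⟨h, -⟩
    · exact congrArg _ (Sum.inr.inj h)
    · exact absurd h Sum.inr_ne_inl

lemma card_pendantCycle_vertices : Fintype.card (Fin n ⊕ Σ _ : Fin n, Fin k) = n * (k + 1) := by
  simp [Fintype.card_sigma]
  ring

lemma ncard_edgeSet_pendantCycle (hn : 3 ≤ n) :
    (pendantCycle n fun _ => k).edgeSet.ncard = n * (k + 1) := by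
  rw [edgeSet_pendantCycle hn, Set.ncard_range_of_injective (pendantCycleEdge_injective hn),
    Nat.card_eq_fintype_card, card_pendantCycle_vertices]

lemma sum_edgeSum_pendantCycleEdge (f : Fin n ⊕ (Σ _ : Fin n, Fin k) → ℕ) :
    ∑ v, edgeSum f (pendantCycleEdge v) = ∑ v, f v + (k + 1) * ∑ i, f (.inl i) := by
  have hcycle : ∑ i, f (.inl (finRotate n i)) = ∑ i, f (.inl i) :=
    Equiv.sum_comp (finRotate n) fun i => f (.inl i)
  have hpendant : ∑ x : Σ _ : Fin n, Fin k, f (.inl x.1) = k * ∑ i, f (.inl i) := by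
    rw [Fintype.sum_sigma, Finset.mul_sum]
    simp
  simp only [Fintype.sum_sum_type, pendantCycleEdge, edgeSum_mk, Finset.sum_add_distrib,
    hcycle, hpendant]
  ring

theorem IsSEMT.mul_eq_of_pendantCycle (hn : 3 ≤ n) {fv : Fin n ⊕ (Σ _ : Fin n, Fin k) → ℕ}
    {fe : Sym2 (Fin n ⊕ Σ _ : Fin n, Fin k) → ℕ} {c : ℕ}
    (h : IsSEMT (pendantCycle n fun _ => k) fv fe c) :
    n * (k + 1) * c =
      ∑ i ∈ Ioc 0 (n * (k + 1) + n * (k + 1)), i + (k + 1) * ∑ i, fv (.inl i) := by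
  set p := n * (k + 1)
  have hvert : Set.BijOn fv Set.univ (Set.Icc 1 p) := by
    simpa only [card_pendantCycle_vertices] using h.1
  have hedge : Set.BijOn (fe ∘ pendantCycleEdge) Set.univ (Set.Icc (p + 1) (p + p)) := by
    have := h.2.1
    rw [card_pendantCycle_vertices, ncard_edgeSet_pendantCycle hn, edgeSet_pendantCycle hn] at this
    exact this.comp ⟨fun _ _ => Set.mem_range_self _,
      (pendantCycleEdge_injective hn).injOn, fun _ ⟨v, hv⟩ => ⟨v, trivial, hv⟩⟩
  have hmagic : ∑ v, (edgeSum fv (pendantCycleEdge v) + fe (pendantCycleEdge v)) = p * c := by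
    simp only [fun v => h.edgeSum_add_eq (pendantCycleEdge_mem_edgeSet hn v), sum_const,
      card_univ, card_pendantCycle_vertices, smul_eq_mul, p]
  rw [sum_add_distrib, sum_edgeSum_pendantCycleEdge, sum_eq_sum_Ioc_of_bijOn hvert,
    show ∑ v, fe (pendantCycleEdge v) = _ from sum_eq_sum_Ioc_of_bijOn hedge] at hmagic
  rw [← sum_Ioc_consecutive _ (Nat.zero_le p) (Nat.le_add_right p p)]
  omega

theorem IsSEMT.le_of_pendantCycle (hn : 3 ≤ n) {fv : Fin n ⊕ (Σ _ : Fin n, Fin k) → ℕ}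
    {fe : Sym2 (Fin n ⊕ Σ _ : Fin n, Fin k) → ℕ} {c : ℕ}
    (h : IsSEMT (pendantCycle n fun _ => k) fv fe c) : 2 * (n * (k + 1)) + (n + 3) / 2 ≤ c := by
  have hsum := h.mul_eq_of_pendantCycle hn
  set p := n * (k + 1)
  have hgauss := two_mul_sum_Ioc_zero (p + p)
  have hcycle : n * (n + 1) ≤ 2 * ∑ i, fv (.inl i) := by
    simpa using Fintype.card_mul_succ_le_two_mul_sum (g := fun i => fv (.inl i))
      (fun i j hij => Sum.inl.inj (h.1.injOn (Set.mem_univ _) (Set.mem_univ _) hij))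
      (fun i => (h.1.mapsTo (Set.mem_univ _)).1)
  have hpc : p * (4 * p + n + 3) ≤ p * (2 * c) := by
    have : p * (n + 1) ≤ (k + 1) * (2 * ∑ i, fv (.inl i)) := calc
      p * (n + 1) = (k + 1) * (n * (n + 1)) := by ring
      _ ≤ _ := Nat.mul_le_mul_left _ hcycle
    linarith
  have := Nat.le_of_mul_le_mul_left hpc (by positivity)
  omega

def cycleLabel (n : ℕ) (i : Fin n) : ℕ :=
  if (i : ℕ) % 2 = 0 then i / 2 + 1 else n / 2 + 1 + (i + 1) / 2

def pendantCycleLabel (n k : ℕ) : Fin n ⊕ (Σ _ : Fin n, Fin k) → ℕ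
  | .inl i => cycleLabel n i
  | .inr ⟨i, j⟩ => (j + 1) * n + cycleLabel n (finRotate n i)

lemma cycleLabel_mem_Icc (ho : Odd n) (i : Fin n) : cycleLabel n i ∈ Set.Icc 1 n := by
  have := Nat.odd_iff.1 ho
  have := i.isLt
  simp only [cycleLabel, Set.mem_Icc]
  split_ifs <;> omega

lemma cycleLabel_injective (ho : Odd n) : Injective (cycleLabel n) := by
  intro i i' h
  have := Nat.odd_iff.1 ho
  have := i.isLt
  have := i'.isLt
  simp only [cycleLabel] at h
  ext
  split_ifs at h <;> omega

lemma cycleLabel_add_cycleLabel_finRotate (ho : Odd n) (i : Fin n) :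
    cycleLabel n i + cycleLabel n (finRotate n i) = n / 2 + 2 + finRotate n i := by
  have := Nat.odd_iff.1 ho
  have := i.isLt
  simp only [cycleLabel, Fin.val_finRotate]
  split_ifs <;> omega

lemma pendantCycleLabel_mem_Icc (ho : Odd n) (v : Fin n ⊕ Σ _ : Fin n, Fin k) :
    pendantCycleLabel n k v ∈ Set.Icc 1 (n * (k + 1)) := by
  have hlabel := cycleLabel_mem_Icc ho
  simp only [Set.mem_Icc] at hlabel ⊢
  rcases v with i | ⟨i, j⟩
  · have := hlabel i
    have : n ≤ n * (k + 1) := Nat.le_mul_of_pos_right n (Nat.succ_pos k)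
    simp only [pendantCycleLabel]
    omega
  · have := hlabel (finRotate n i)
    have : (j + 1) * n + n ≤ n * (k + 1) := by nlinarith [j.isLt]
    simp only [pendantCycleLabel]
    omega

lemma pendantCycleLabel_injective (ho : Odd n) : Injective (pendantCycleLabel n k) := by
  have hlabel := cycleLabel_mem_Icc ho
  simp only [Set.mem_Icc] at hlabel
  rintro (i | ⟨i, j⟩) (i' | ⟨i', j'⟩) h <;> simp only [pendantCycleLabel] at h
  · rw [cycleLabel_injective ho h]
  · have := hlabel i
    have := hlabel (finRotate n i')
    have : n ≤ (j' + 1) * n := Nat.le_mul_of_pos_left n (Nat.succ_pos j')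
    omega
  · have := hlabel i'
    have := hlabel (finRotate n i)
    have : n ≤ (j + 1) * n := Nat.le_mul_of_pos_left n (Nat.succ_pos j)
    omega
  · have := hlabel (finRotate n i)
    have := hlabel (finRotate n i')
    obtain ⟨hj, hi⟩ := Nat.eq_and_eq_of_mul_add_eq (n := n) (l := j + 1) (l' := j' + 1)
      (r := cycleLabel n (finRotate n i) - 1) (r' := cycleLabel n (finRotate n i') - 1)
      (by omega) (by omega) (by omega)
    obtain rfl := (finRotate n).injective (cycleLabel_injective ho (by omega :
      cycleLabel n (finRotate n i) = cycleLabel n (finRotate n i')))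
    obtain rfl : j = j' := Fin.ext (by omega)
    rfl

lemma edgeSum_pendantCycleLabel_inl (ho : Odd n) (i : Fin n) :
    edgeSum (pendantCycleLabel n k) (pendantCycleEdge (.inl i)) = n / 2 + 2 + finRotate n i :=
  cycleLabel_add_cycleLabel_finRotate ho i

lemma edgeSum_pendantCycleLabel_inr (ho : Odd n) (i : Fin n) (j : Fin k) :
    edgeSum (pendantCycleLabel n k) (pendantCycleEdge (.inr ⟨i, j⟩)) =
      (j + 1) * n + (n / 2 + 2 + finRotate n i) := by
  rw [← cycleLabel_add_cycleLabel_finRotate ho]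
  simp only [pendantCycleEdge, edgeSum_mk, pendantCycleLabel]
  ring

lemma edgeSum_pendantCycleLabel_injective (ho : Odd n) :
    Injective (edgeSum (pendantCycleLabel n k) ∘ pendantCycleEdge) := by
  rintro (i | ⟨i, j⟩) (i' | ⟨i', j'⟩) h <;>
    simp only [comp_apply, edgeSum_pendantCycleLabel_inl ho,
      edgeSum_pendantCycleLabel_inr ho] at h
  · rw [(finRotate n).injective (Fin.ext (by omega : (finRotate n i : ℕ) = finRotate n i'))]
  · have := (finRotate n i).isLt
    have : n ≤ (j' + 1) * n := Nat.le_mul_of_pos_left n (Nat.succ_pos j')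
    omega
  · have := (finRotate n i').isLt
    have : n ≤ (j + 1) * n := Nat.le_mul_of_pos_left n (Nat.succ_pos j)
    omega
  · obtain ⟨hj, hi⟩ := Nat.eq_and_eq_of_mul_add_eq (finRotate n i).isLt (finRotate n i').isLt
      (by omega : (j + 1 : ℕ) * n + finRotate n i = (j' + 1) * n + finRotate n i')
    obtain rfl := (finRotate n).injective (Fin.ext hi)
    obtain rfl : j = j' := Fin.ext (by omega)
    rfl

lemma edgeSum_pendantCycleLabel_mem_Icc (ho : Odd n) (v : Fin n ⊕ Σ _ : Fin n, Fin k) :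
    edgeSum (pendantCycleLabel n k) (pendantCycleEdge v) ∈
      Set.Icc (n / 2 + 1 + 1) (n / 2 + 1 + n * (k + 1)) := by
  rw [Set.mem_Icc]
  rcases v with i | ⟨i, j⟩
  · have := (finRotate n i).isLt
    have : n ≤ n * (k + 1) := Nat.le_mul_of_pos_right n (Nat.succ_pos k)
    rw [edgeSum_pendantCycleLabel_inl ho]
    omega
  · have := (finRotate n i).isLt
    have : (j + 1) * n + n ≤ n * (k + 1) := by nlinarith [j.isLt]
    rw [edgeSum_pendantCycleLabel_inr ho]
    omega

theorem exists_isSEMT_pendantCycleLabel (hn : 3 ≤ n) (ho : Odd n) :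
    ∃ fe, IsSEMT (pendantCycle n fun _ => k) (pendantCycleLabel n k) fe
      (2 * n * (k + 1) + (n + 3) / 2) := by
  have hcard := card_pendantCycle_vertices (n := n) (k := k)
  have hncard := ncard_edgeSet_pendantCycle (k := k) hn
  have hvert : Set.BijOn (pendantCycleLabel n k) Set.univ (Set.Icc 1 (n * (k + 1))) :=
    Set.bijOn_of_injOn_of_ncard_le (fun v _ => pendantCycleLabel_mem_Icc ho v)
      (pendantCycleLabel_injective ho).injOn (Set.finite_Icc _ _)
      (by simp [Set.ncard_univ, hcard])
  have hedge : Set.BijOn (edgeSum (pendantCycleLabel n k)) (pendantCycle n fun _ => k).edgeSet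
      (Set.Icc (n / 2 + 1 + 1) (n / 2 + 1 + n * (k + 1))) := by
    rw [edgeSet_pendantCycle hn]
    refine Set.bijOn_of_injOn_of_ncard_le (Set.range_subset_iff.2 ?_)
      (edgeSum_pendantCycleLabel_injective ho).injOn_range (Set.finite_Icc _ _) ?_
    · exact edgeSum_pendantCycleLabel_mem_Icc ho
    · rw [← edgeSet_pendantCycle hn, hncard]
      simp
  have hodd := Nat.odd_iff.1 ho
  have hsemt := isSEMT_of_bijOn_edgeSum _ _ (n / 2 + 1) (hcard ▸ hvert) (hncard ▸ hedge)
  rw [hcard, hncard, show n * (k + 1) + n * (k + 1) + (n / 2 + 1) + 1 =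
    2 * n * (k + 1) + (n + 3) / 2 by rw [mul_assoc]; omega] at hsemt
  exact ⟨_, hsemt⟩

end PendantCycle

/-- For odd `n ≥ 3` and `k ≥ 0`, the unicyclic graph with `k` pendants at every vertex of the
cycle `Cₙ` has super edge-magic total strength `2n(k+1) + (n+3)/2`. -/
theorem stmt_8 (n k : ℕ) (hn : 3 ≤ n) (ho : Odd n) :
    sInf {c | ∃ fv fe, IsSEMT (pendantCycle n (fun _ => k)) fv fe c} =
      2 * n * (k + 1) + (n + 3) / 2 := by
  refine IsLeast.csInf_eq ⟨⟨_, exists_isSEMT_pendantCycleLabel hn ho⟩, ?_⟩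
  rintro c ⟨fv, fe, h⟩
  rw [mul_assoc]
  exact h.le_of_pendantCycle hn
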